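/- A truncated weighted shift J_λ on ℂ^k with weights λ = (λ₁, …, λ_{k−1}) satisfying |λᵢ| = |λ_{k−i}| for all i = 1, …, k−1 is complex symmetric, i.e., there exists a conjugation C on ℂ^k with J_λ = C J_λ* C. -/

import Mathlib

open InnerProductSpace in
/-- A conjugation on a complex inner product space: an antilinear involution
satisfying `⟪Cf, Cg⟫ = ⟪g, f⟫`. -/
structure Conjugation (H : Type*) [NormedAddCommGroup H] [InnerProductSpace ℂ H] where
  toFun : H → H
  map_add' : ∀ x y, toFun (x + y) = toFun x + toFun y
  map_smul' : ∀ (c : ℂ) (x : H), toFun (c • x) = (starRingEnd ℂ c) • toFun x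
  invol : ∀ x, toFun (toFun x) = x
  inner_map : ∀ x y, (inner ℂ (toFun x) (toFun y) : ℂ) = inner ℂ y x

/-- `T` is `C`-symmetric: `T ⊆ C T* C`. -/
noncomputable def CSymmetric {H : Type*} [NormedAddCommGroup H] [InnerProductSpace ℂ H]
    [CompleteSpace H] (C : Conjugation H) (T : H →ₗ.[ℂ] H) : Prop :=
  ∀ x : T.domain, ∃ hx : C.toFun x ∈ T.adjoint.domain,
    C.toFun (T.adjoint ⟨C.toFun x, hx⟩) = T x

/-- `T` is `C`-selfadjoint: `T = C T* C`. -/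
noncomputable def CSelfAdjoint {H : Type*} [NormedAddCommGroup H] [InnerProductSpace ℂ H]
    [CompleteSpace H] (C : Conjugation H) (T : H →ₗ.[ℂ] H) : Prop :=
  CSymmetric C T ∧ ∀ y : H, C.toFun y ∈ T.adjoint.domain → y ∈ T.domain

/-- Composition of partially defined linear maps, with its natural (maximal) domain. -/
noncomputable def LinearPMap.pcomp {R E F G : Type*} [Ring R] [AddCommGroup E] [Module R E]
    [AddCommGroup F] [Module R F] [AddCommGroup G] [Module R G]
    (g : F →ₗ.[R] G) (f : E →ₗ.[R] F) : E →ₗ.[R] G :=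
  g.comp (f.domRestrict ((g.domain.comap f.toFun).map f.domain.subtype))
    (by
      rintro ⟨x, hx⟩
      obtain ⟨y, hy, hyx⟩ := (Submodule.mem_inf.mp hx).1
      erw [LinearPMap.domRestrict_apply (y := y) (by exact hyx.symm)]
      exact hy)

/-- Natural powers of a partially defined linear map, `T^(n+1) = T ∘ T^n`, with
`T^0` the identity on the whole space. -/
noncomputable def LinearPMap.ppow {R E : Type*} [Ring R] [AddCommGroup E] [Module R E]
    (T : E →ₗ.[R] E) : ℕ → E →ₗ.[R] E
  | 0 => ⟨⊤, (⊤ : Submodule R E).subtype⟩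
  | n + 1 => T.pcomp (T.ppow n)

/-! The conjugation is `C f = α · conj (f ∘ rev)` for a vector `α` of unimodular entries with
`α ∘ rev = α`; coordinatewise, `J = C J* C` then amounts to
`α_{j+1} · conj α_j · μ_{k-2-j} = μ_j`. Writing `μ_j = |μ_j| s_j` with `|s_j| = 1` and
`d_j = s_0 ⋯ s_{j-1}` (`partialPhase`), the symmetric choice `α_i = d_i d_{k-1-i}`
(`reversalPhase`) has `α_{j+1} · conj α_j = s_j · conj s_{k-2-j}`, and the identity follows
from `|μ_j| = |μ_{k-2-j}|`. -/
open ComplexConjugate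

namespace Conjugation

variable {ι : Type*} [Fintype ι]

def phasedReversal (σ : ι → ι) (hσ : Function.Involutive σ) (α : ι → Circle)
    (hα : ∀ i, α (σ i) = α i) : Conjugation (EuclideanSpace ℂ ι) where
  toFun f := WithLp.toLp 2 fun i => α i * conj (f (σ i))
  map_add' f g := by ext i; simp [mul_add]
  map_smul' c f := by
    ext i
    simp only [PiLp.smul_apply, smul_eq_mul, map_mul]
    ring
  invol f := by
    ext i
    simp [hσ i, hα, ← Circle.coe_inv_eq_conj]
  inner_map f g := by
    simp only [PiLp.inner_apply, RCLike.inner_apply]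
    rw [← hσ.bijective.sum_comp]
    refine Finset.sum_congr rfl fun i _ => ?_
    simp only [hσ i, map_mul, Complex.conj_conj, ← Circle.coe_inv_eq_conj, Circle.coe_inv]
    field_simp

lemma phasedReversal_apply {σ : ι → ι} {hσ : Function.Involutive σ} {α : ι → Circle}
    {hα : ∀ i, α (σ i) = α i} (f : EuclideanSpace ℂ ι) (i : ι) :
    (phasedReversal σ hσ α hα).toFun f i = α i * conj (f (σ i)) :=
  rfl

end Conjugation

noncomputable def partialPhase (μ : ℕ → ℂ) (j : ℕ) : Circle :=
  ∏ t ∈ Finset.range j, Circle.exp (μ t).arg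

lemma partialPhase_succ (μ : ℕ → ℂ) (j : ℕ) :
    partialPhase μ (j + 1) = partialPhase μ j * Circle.exp (μ j).arg :=
  Finset.prod_range_succ _ _

noncomputable def reversalPhase {k : ℕ} (μ : ℕ → ℂ) (i : Fin k) : Circle :=
  partialPhase μ i * partialPhase μ i.rev

lemma reversalPhase_rev {k : ℕ} (μ : ℕ → ℂ) (i : Fin k) :
    reversalPhase μ i.rev = reversalPhase μ i := by
  rw [reversalPhase, reversalPhase, Fin.rev_rev, mul_comm]

lemma reversalPhase_mul_inv_mul {k : ℕ} (μ : ℕ → ℂ) {a b : Fin k} (hab : (a : ℕ) + 1 = b) :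
    reversalPhase μ b * (reversalPhase μ a)⁻¹ * Circle.exp (μ b.rev).arg =
      Circle.exp (μ a).arg := by
  have hrev : (a.rev : ℕ) = b.rev + 1 := by simp only [Fin.val_rev]; omega
  simp only [reversalPhase, ← hab, hrev, partialPhase_succ]
  rw [← Circle.coe_inj]
  push_cast
  field_simp

lemma reversalPhase_mul_conj_mul {k : ℕ} {μ : ℕ → ℂ} {a b : Fin k} (hab : (a : ℕ) + 1 = b)
    (hμ : ‖μ a‖ = ‖μ b.rev‖) :
    reversalPhase μ b * conj (reversalPhase μ a : ℂ) * μ b.rev = μ a := by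
  rw [← Circle.coe_inv_eq_conj]
  conv_lhs => rw [← Complex.norm_mul_exp_arg_mul_I (μ b.rev)]
  conv_rhs => rw [← Complex.norm_mul_exp_arg_mul_I (μ a), ← Circle.coe_exp,
    ← reversalPhase_mul_inv_mul μ hab, hμ]
  push_cast
  ring

noncomputable def reversalConjugation {k : ℕ} (μ : ℕ → ℂ) :
    Conjugation (EuclideanSpace ℂ (Fin k)) :=
  Conjugation.phasedReversal Fin.rev Fin.rev_involutive (reversalPhase μ) (reversalPhase_rev μ)

def IsWeightedShift {k : ℕ} (μ : ℕ → ℂ)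
    (J : EuclideanSpace ℂ (Fin k) →L[ℂ] EuclideanSpace ℂ (Fin k)) : Prop :=
  ∀ i : Fin k, J (EuclideanSpace.single i 1) =
    if h : (i : ℕ) + 1 < k then μ i • EuclideanSpace.single (⟨(i : ℕ) + 1, h⟩ : Fin k) 1 else 0

lemma EuclideanSpace.adjoint_apply_eq_inner_single {𝕜 ι : Type*} [RCLike 𝕜] [Fintype ι]
    [DecidableEq ι] (T : EuclideanSpace 𝕜 ι →L[𝕜] EuclideanSpace 𝕜 ι) (y : EuclideanSpace 𝕜 ι)
    (i : ι) : ContinuousLinearMap.adjoint T y i = inner 𝕜 (T (EuclideanSpace.single i 1)) y := by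
  rw [← ContinuousLinearMap.adjoint_inner_right, EuclideanSpace.inner_single_left, map_one, one_mul]

namespace IsWeightedShift

variable {k : ℕ} {μ : ℕ → ℂ} {J : EuclideanSpace ℂ (Fin k) →L[ℂ] EuclideanSpace ℂ (Fin k)}

lemma apply_eq_sum (hJ : IsWeightedShift μ J) (x : EuclideanSpace ℂ (Fin k)) (i : Fin k) :
    J x i = ∑ m : Fin k, if (m : ℕ) + 1 = i then μ m * x m else 0 := by
  conv_lhs => rw [← (EuclideanSpace.basisFun (Fin k) ℂ).sum_repr x]
  simp only [EuclideanSpace.basisFun_apply, EuclideanSpace.basisFun_repr, map_sum, map_smul,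
    WithLp.ofLp_sum, Finset.sum_apply, PiLp.smul_apply]
  refine Finset.sum_congr rfl fun m _ => ?_
  rw [hJ m]
  split_ifs <;> simp_all [Fin.ext_iff, mul_comm]

lemma apply_eq_zero_of_val_eq_zero (hJ : IsWeightedShift μ J) (x : EuclideanSpace ℂ (Fin k))
    {i : Fin k} (hi : (i : ℕ) = 0) : J x i = 0 := by
  simp [hJ.apply_eq_sum, hi]

lemma apply_of_val_add_one (hJ : IsWeightedShift μ J) (x : EuclideanSpace ℂ (Fin k))
    {a b : Fin k} (hab : (a : ℕ) + 1 = b) : J x b = μ a * x a := by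
  rw [hJ.apply_eq_sum, Finset.sum_eq_single a (fun m _ hm => if_neg ?_) (by simp), if_pos hab]
  exact fun h => hm (Fin.ext (by omega))

lemma adjoint_apply_of_val_add_one (hJ : IsWeightedShift μ J) (y : EuclideanSpace ℂ (Fin k))
    {a b : Fin k} (hab : (a : ℕ) + 1 = b) :
    ContinuousLinearMap.adjoint J y a = conj (μ a) * y b := by
  have hb : (⟨(a : ℕ) + 1, hab ▸ b.isLt⟩ : Fin k) = b := Fin.ext hab
  rw [EuclideanSpace.adjoint_apply_eq_inner_single, hJ a, dif_pos (hab ▸ b.isLt), hb,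
    inner_smul_left, EuclideanSpace.inner_single_left, map_one, one_mul]

lemma adjoint_apply_eq_zero_of_val_add_one_eq (hJ : IsWeightedShift μ J)
    (y : EuclideanSpace ℂ (Fin k)) {a : Fin k} (ha : (a : ℕ) + 1 = k) :
    ContinuousLinearMap.adjoint J y a = 0 := by
  rw [EuclideanSpace.adjoint_apply_eq_inner_single, hJ a, dif_neg (by omega), inner_zero_left]

theorem eq_reversalConjugation_adjoint (hJ : IsWeightedShift μ J)
    (hμ : ∀ i : ℕ, i + 1 < k → ‖μ i‖ = ‖μ (k - 2 - i)‖) (x : EuclideanSpace ℂ (Fin k)) :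
    J x = (reversalConjugation μ).toFun
      (ContinuousLinearMap.adjoint J ((reversalConjugation μ).toFun x)) := by
  ext i
  simp only [reversalConjugation, Conjugation.phasedReversal_apply]
  by_cases hi : (i : ℕ) = 0
  · rw [hJ.apply_eq_zero_of_val_eq_zero x hi,
      hJ.adjoint_apply_eq_zero_of_val_add_one_eq _ (by simp only [Fin.val_rev]; omega)]
    simp
  · obtain ⟨a, hab⟩ : ∃ a : Fin k, (a : ℕ) + 1 = i :=
      ⟨⟨i - 1, by omega⟩, Nat.sub_add_cancel (Nat.one_le_iff_ne_zero.mpr hi)⟩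
    rw [hJ.apply_of_val_add_one x hab,
      hJ.adjoint_apply_of_val_add_one _ (b := a.rev) (by simp only [Fin.val_rev]; omega)]
    have hμa : ‖μ a‖ = ‖μ i.rev‖ := by
      rw [hμ a (by omega), Fin.val_rev]; congr 2; omega
    rw [Conjugation.phasedReversal_apply, Fin.rev_rev, reversalPhase_rev, map_mul, map_mul,
      Complex.conj_conj, Complex.conj_conj, ← reversalPhase_mul_conj_mul hab hμa]
    ring

end IsWeightedShift

theorem stmt_7_general (k : ℕ) (μ : ℕ → ℂ)
    (J : EuclideanSpace ℂ (Fin k) →L[ℂ] EuclideanSpace ℂ (Fin k))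
    (hJ : ∀ i : Fin k, J (EuclideanSpace.single i 1) =
      if h : (i : ℕ) + 1 < k then μ i • EuclideanSpace.single (⟨(i : ℕ) + 1, h⟩ : Fin k) 1
      else 0)
    (hμ : ∀ i : ℕ, i + 1 < k → ‖μ i‖ = ‖μ (k - 2 - i)‖) :
    ∃ C : Conjugation (EuclideanSpace ℂ (Fin k)),
      ∀ x, J x = C.toFun (ContinuousLinearMap.adjoint J (C.toFun x)) :=
  ⟨reversalConjugation μ, IsWeightedShift.eq_reversalConjugation_adjoint hJ hμ⟩

/-- a truncated weighted shift `J` on `ℂ^k` (with `0`-indexed weights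
`μ 0, …, μ (k-2)`, so that `J eᵢ = μ i • e_{i+1}` and `J e_{k-1} = 0`) whose weights
satisfy `|μ i| = |μ (k-2-i)|` is complex symmetric: `J = C J* C` for some conjugation. -/
theorem stmt_7 (k : ℕ) (hk : 1 ≤ k) (μ : ℕ → ℂ)
    (J : EuclideanSpace ℂ (Fin k) →L[ℂ] EuclideanSpace ℂ (Fin k))
    (hJ : ∀ i : Fin k, J (EuclideanSpace.single i 1) =
      if h : (i : ℕ) + 1 < k then μ i • EuclideanSpace.single (⟨(i : ℕ) + 1, h⟩ : Fin k) 1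
      else 0)
    (hμ : ∀ i : ℕ, i + 1 < k → ‖μ i‖ = ‖μ (k - 2 - i)‖) :
    ∃ C : Conjugation (EuclideanSpace ℂ (Fin k)),
      ∀ x, J x = C.toFun (ContinuousLinearMap.adjoint J (C.toFun x)) :=
  stmt_7_general k μ J hJ hμ
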